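/- Let A be a Banach algebra and B a Banach A-bimodule such that the span of products of 2n elements of A is dense in A, and A·B** ⊆ B and B**·A ⊆ B (as subsets of B** via the canonical embedding). If every continuous derivation from A into B* is inner, then for every n ≥ 0 every continuous derivation from A into B^(2n+1) is inner. -/

import Mathlib

open ContinuousLinearMap NormedSpace

namespace NormedSpace

/-- The old Mathlib `NormedSpace.Dual` (removed; now `StrongDual`), restated verbatim. -/
abbrev Dual (𝕜 : Type*) [NontriviallyNormedField 𝕜] (E : Type*) [SeminormedAddCommGroup E]
    [NormedSpace 𝕜 E] : Type _ := E →L[𝕜] 𝕜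

end NormedSpace

noncomputable section

section Defs

variable {X Y Z W : Type} [NormedAddCommGroup X] [NormedSpace ℝ X]
  [NormedAddCommGroup Y] [NormedSpace ℝ Y] [NormedAddCommGroup Z] [NormedSpace ℝ Z]
  [NormedAddCommGroup W] [NormedSpace ℝ W]

/-- The first adjoint `m^*` of a bounded bilinear map `m : X × Y → Z`,
as a map `Z^* × X → Y^*`, `⟨m^*(z',x), y⟩ = ⟨z', m(x,y)⟩`. -/
def adj1 (m : X →L[ℝ] Y →L[ℝ] Z) :
    Dual ℝ Z →L[ℝ] X →L[ℝ] Dual ℝ Y :=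
  (((ContinuousLinearMap.compL ℝ X (Y →L[ℝ] Z) (Dual ℝ Y)).flip m).comp
    (ContinuousLinearMap.compL ℝ Y Z ℝ))

@[simp] lemma adj1_apply (m : X →L[ℝ] Y →L[ℝ] Z) (z' : Dual ℝ Z) (x : X) (y : Y) :
    adj1 m z' x y = z' (m x y) := rfl

/-- The first (left) Arens extension `m^{***} : X^{**} × Y^{**} → Z^{**}` of a
bounded bilinear map `m : X × Y → Z`. -/
def arens (m : X →L[ℝ] Y →L[ℝ] Z) :
    Dual ℝ (Dual ℝ X) →L[ℝ] Dual ℝ (Dual ℝ Y) →L[ℝ] Dual ℝ (Dual ℝ Z) :=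
  adj1 (adj1 (adj1 m))

/-- The adjoint (dual map) of a bounded linear map. -/
def dualMap' (D : X →L[ℝ] Y) : Dual ℝ Y →L[ℝ] Dual ℝ X :=
  (ContinuousLinearMap.compL ℝ X Y ℝ).flip D

@[simp] lemma dualMap'_apply (D : X →L[ℝ] Y) (g : Dual ℝ Y) (x : X) :
    dualMap' D g x = g (D x) := rfl

/-- The second adjoint `D'' : X^{**} → Y^{**}` of a bounded linear map. -/
def bidualMap (D : X →L[ℝ] Y) : Dual ℝ (Dual ℝ X) →L[ℝ] Dual ℝ (Dual ℝ Y) :=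
  dualMap' (dualMap' D)

/-- Given an action `t : A × X → X`, the transposed action on the dual `X^*`:
`(dualAct t) a f = f ∘ (t a)`. -/
def dualAct (t : W →L[ℝ] X →L[ℝ] X) : W →L[ℝ] Dual ℝ X →L[ℝ] Dual ℝ X :=
  ((ContinuousLinearMap.compL ℝ X X ℝ).flip).comp t

@[simp] lemma dualAct_apply (t : W →L[ℝ] X →L[ℝ] X) (a : W) (f : Dual ℝ X) (x : X) :
    dualAct t a f x = f (t a x) := rfl

/-- `D : A → X` is a derivation with respect to the multiplication `mul'` on `A`
and the left action `l` and right action `r` (`r a x` means `x · a`) of `A` on `X`. -/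
def IsDer {A' : Type} [NormedAddCommGroup A'] [NormedSpace ℝ A']
    (mul' : A' →L[ℝ] A' →L[ℝ] A') (l r : A' →L[ℝ] X →L[ℝ] X) (D : A' →L[ℝ] X) : Prop :=
  ∀ a b : A', D (mul' a b) = l a (D b) + r b (D a)

/-- `D : A → X` is an inner derivation: `D a = a·x - x·a` for some `x`. -/
def IsInner {A' : Type} [NormedAddCommGroup A'] [NormedSpace ℝ A']
    (l r : A' →L[ℝ] X →L[ℝ] X) (D : A' →L[ℝ] X) : Prop :=
  ∃ x : X, ∀ a : A', D a = l a x - r a x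

/-- The bimodule axioms for actions `l`, `r` of an algebra with multiplication `mul'`. -/
def IsBimod {A' : Type} [NormedAddCommGroup A'] [NormedSpace ℝ A']
    (mul' : A' →L[ℝ] A' →L[ℝ] A') (l r : A' →L[ℝ] X →L[ℝ] X) : Prop :=
  (∀ a b x, l (mul' a b) x = l a (l b x)) ∧
  (∀ a b x, r (mul' a b) x = r b (r a x)) ∧
  (∀ a b x, l a (r b x) = r b (l a x))

/-- weak*-to-weak* continuity of a map between dual spaces. -/
def WStarCont (f : Dual ℝ X → Dual ℝ Y) : Prop :=
  ∀ y : Y, Continuous fun φ : WeakDual ℝ X => f φ y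

end Defs

/-- A packaged Banach `A`-bimodule (used to form iterated duals). -/
structure ModPk (A : Type) [NormedAddCommGroup A] [NormedSpace ℝ A] : Type 1 where
  X : Type
  [grp : NormedAddCommGroup X]
  [mod : NormedSpace ℝ X]
  l : A →L[ℝ] X →L[ℝ] X
  r : A →L[ℝ] X →L[ℝ] X

attribute [instance] ModPk.grp ModPk.mod

variable {A : Type} [NormedAddCommGroup A] [NormedSpace ℝ A]

/-- The canonical dual of a packaged bimodule. -/
def ModPk.dual (P : ModPk A) : ModPk A :=
  ⟨Dual ℝ P.X, dualAct P.r, dualAct P.l⟩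

/-- The `n`-th iterated dual of a packaged bimodule. -/
def ModPk.iter (P : ModPk A) : ℕ → ModPk A
  | 0 => P
  | n+1 => (P.iter n).dual

/-- A "level": an algebra (given by its bilinear multiplication) together with a bimodule. -/
structure Lvl : Type 1 where
  Alg : Type
  [g1 : NormedAddCommGroup Alg]
  [m1 : NormedSpace ℝ Alg]
  Mod : Type
  [g2 : NormedAddCommGroup Mod]
  [m2 : NormedSpace ℝ Mod]
  mul : Alg →L[ℝ] Alg →L[ℝ] Alg
  l : Alg →L[ℝ] Mod →L[ℝ] Mod
  r : Alg →L[ℝ] Mod →L[ℝ] Mod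

attribute [instance] Lvl.g1 Lvl.m1 Lvl.g2 Lvl.m2

/-- Passing to second duals: `A^{**}` with the first Arens product, acting on `B^{**}`
via the Arens extensions `π_ℓ^{***}` and `π_r^{***}` of the module actions. -/
def Lvl.double (Q : Lvl) : Lvl where
  Alg := Dual ℝ (Dual ℝ Q.Alg)
  Mod := Dual ℝ (Dual ℝ Q.Mod)
  mul := arens Q.mul
  l := arens Q.l
  r := (arens Q.r.flip).flip

/-- Iterated even duals: `Lvl.iter Q n` is the level `(A^{(2n)}, B^{(2n)})`. -/
def Lvl.iter (Q : Lvl) : ℕ → Lvl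
  | 0 => Q
  | n+1 => (Q.iter n).double

/-- The canonical embedding `A → A^{(2n)}`. -/
def Lvl.embA (Q : Lvl) : (n : ℕ) → Q.Alg →L[ℝ] (Q.iter n).Alg
  | 0 => ContinuousLinearMap.id ℝ _
  | n+1 => (inclusionInDoubleDual ℝ ((Q.iter n).Alg)).comp (Q.embA n)

/-- The canonical embedding `B → B^{(2n)}`. -/
def Lvl.embM (Q : Lvl) : (n : ℕ) → Q.Mod →L[ℝ] (Q.iter n).Mod
  | 0 => ContinuousLinearMap.id ℝ _
  | n+1 => (inclusionInDoubleDual ℝ ((Q.iter n).Mod)).comp (Q.embM n)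

/-- The left-topological-center condition `Z^ℓ_{A^{(2n+2)}}(B^{(2n+2)}) = B^{(2n+2)}`,
stated at the double of a level `Q`: for each `b` in the second-dual module, the map
`a ↦ b·a` is weak*-to-weak* continuous. -/
def Lvl.doubleZl (Q : Lvl) : Prop :=
  ∀ b : (Q.double).Mod, WStarCont (X := Dual ℝ Q.Alg) (Y := Dual ℝ Q.Mod)
    (fun a => (Q.double).r a b)

/-- The base level of a Banach algebra `A` with a Banach `A`-bimodule `B`. -/
def lvlOf (A : Type) [NormedRing A] [NormedAlgebra ℝ A]
    (B : Type) [NormedAddCommGroup B] [NormedSpace ℝ B]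
    (l r : A →L[ℝ] B →L[ℝ] B) : Lvl :=
  Lvl.mk A B (ContinuousLinearMap.mul ℝ A) l r

/-!
Restricting a derivation `D : A → B^(2n+1)` to the canonical copy of `B` in `B^(2n)` gives a
derivation into `B*`, which is inner; subtracting the corresponding inner derivation, we may
assume that `D` takes values in the annihilator `B^⊥` of `B`. Since `A·B** ⊆ B` and `B**·A ⊆ B`,
an induction through the second duals shows that the composite of the actions of any `n`
elements of `A` on `B^(2n)` factors through `B`, so every product of `n` elements of `A`
annihilates `B^⊥` from either side. The identity `D(pq) = p·D(q) + D(p)·q` then makes `D` vanish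
on `A^[2n]`, hence on `A` by density.
-/

section Duals

variable {X Y Z : Type} [NormedAddCommGroup X] [NormedSpace ℝ X]
  [NormedAddCommGroup Y] [NormedSpace ℝ Y] [NormedAddCommGroup Z] [NormedSpace ℝ Z]

lemma bidualMap_comp (f : Y →L[ℝ] Z) (g : X →L[ℝ] Y) :
    bidualMap (f.comp g) = (bidualMap f).comp (bidualMap g) := rfl

lemma bidualMap_comp_inclusionInDoubleDual (J : X →L[ℝ] Y) :
    (bidualMap J).comp (inclusionInDoubleDual ℝ X) = (inclusionInDoubleDual ℝ Y).comp J := rfl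

lemma exists_inclusionInDoubleDual_comp_eq (T : Y →L[ℝ] Dual ℝ (Dual ℝ X))
    (hT : ∀ y, ∃ x, T y = inclusionInDoubleDual ℝ X x) :
    ∃ R : Y →L[ℝ] X, (inclusionInDoubleDual ℝ X).comp R = T := by
  let ι := inclusionInDoubleDualLi (E := X) ℝ
  have hrange : ∀ y, T y ∈ LinearMap.range ι.toLinearMap := fun y => by
    obtain ⟨x, hx⟩ := hT y
    exact ⟨x, hx.symm⟩
  refine ⟨(ι.equivRange.symm.toContinuousLinearEquiv : _ →L[ℝ] X).comp (T.codRestrict _ hrange),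
    ?_⟩
  ext y : 1
  exact congrArg Subtype.val (ι.equivRange.apply_symm_apply ⟨T y, hrange y⟩)

lemma dualMap'_dualAct {s : Z →L[ℝ] X →L[ℝ] X} {t : Z →L[ℝ] Y →L[ℝ] Y} {J : X →L[ℝ] Y}
    (hJ : ∀ a x, J (s a x) = t a (J x)) (a : Z) (f : Dual ℝ Y) :
    dualMap' J (dualAct t a f) = dualAct s a (dualMap' J f) := by
  ext x
  simp [hJ]

end Duals

section Derivations

variable {X Y : Type} [NormedAddCommGroup X] [NormedSpace ℝ X]
  [NormedAddCommGroup Y] [NormedSpace ℝ Y] {μ : A →L[ℝ] A →L[ℝ] A}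

def innerDer (l r : A →L[ℝ] X →L[ℝ] X) (x : X) : A →L[ℝ] X := l.flip x - r.flip x

@[simp] lemma innerDer_apply (l r : A →L[ℝ] X →L[ℝ] X) (x : X) (a : A) :
    innerDer l r x a = l a x - r a x := rfl

lemma isDer_innerDer {l r : A →L[ℝ] X →L[ℝ] X} (h : IsBimod μ l r) (x : X) :
    IsDer μ l r (innerDer l r x) := by
  obtain ⟨hl, hr, hlr⟩ := h
  intro a b
  simp only [innerDer_apply, hl, hr, map_sub, hlr]
  abel

lemma IsDer.sub {l r : A →L[ℝ] X →L[ℝ] X} {D₁ D₂ : A →L[ℝ] X} (h₁ : IsDer μ l r D₁)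
    (h₂ : IsDer μ l r D₂) : IsDer μ l r (D₁ - D₂) := by
  intro a b
  simp only [sub_apply, h₁ a b, h₂ a b, map_sub]
  abel

section Intertwining

variable {lX rX : A →L[ℝ] X →L[ℝ] X} {lY rY : A →L[ℝ] Y →L[ℝ] Y} {φ : X →L[ℝ] Y}

lemma IsDer.comp (hl : ∀ a x, φ (lX a x) = lY a (φ x)) (hr : ∀ a x, φ (rX a x) = rY a (φ x))
    {D : A →L[ℝ] X} (hD : IsDer μ lX rX D) : IsDer μ lY rY (φ.comp D) := by
  intro a b
  simp only [ContinuousLinearMap.comp_apply, hD a b, map_add, hl, hr]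

lemma map_innerDer_apply (hl : ∀ a x, φ (lX a x) = lY a (φ x))
    (hr : ∀ a x, φ (rX a x) = rY a (φ x)) (x : X) (a : A) :
    φ (innerDer lX rX x a) = innerDer lY rY (φ x) a := by
  simp [hl, hr]

lemma exists_dualMap'_sub_innerDer_eq_zero {B : Type} [NormedAddCommGroup B] [NormedSpace ℝ B]
    {l r : A →L[ℝ] B →L[ℝ] B} {J : B →L[ℝ] X} (hl : ∀ a b, J (l a b) = lX a (J b))
    (hr : ∀ a b, J (r a b) = rX a (J b)) (hJ : Function.Surjective (dualMap' J))
    (h1 : ∀ D : A →L[ℝ] Dual ℝ B, IsDer μ (dualAct r) (dualAct l) D →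
      IsInner (dualAct r) (dualAct l) D)
    {D : A →L[ℝ] Dual ℝ X} (hD : IsDer μ (dualAct rX) (dualAct lX) D) :
    ∃ x₀, ∀ a, dualMap' J ((D - innerDer (dualAct rX) (dualAct lX) x₀) a) = 0 := by
  obtain ⟨ψ, hψ⟩ := h1 _ (hD.comp (dualMap'_dualAct hr) (dualMap'_dualAct hl))
  obtain ⟨x₀, rfl⟩ := hJ ψ
  refine ⟨x₀, fun a => ?_⟩
  rw [sub_apply, map_sub, map_innerDer_apply (dualMap'_dualAct hr) (dualMap'_dualAct hl)]
  exact sub_eq_zero.mpr (hψ a)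

end Intertwining

lemma isBimod_dualAct {l r : A →L[ℝ] X →L[ℝ] X} (h : IsBimod μ l r) :
    IsBimod μ (dualAct r) (dualAct l) := by
  obtain ⟨hl, hr, hlr⟩ := h
  refine ⟨fun a b f => ?_, fun a b f => ?_, fun a b f => ?_⟩ <;> ext x <;> simp [hl, hr, hlr]

end Derivations

section Biduals

variable {B X : Type} [NormedAddCommGroup B] [NormedSpace ℝ B]
  [NormedAddCommGroup X] [NormedSpace ℝ X]

lemma bidualMap_list_prod_map (t : A →L[ℝ] X →L[ℝ] X) (L : List A) :
    bidualMap (L.map t).prod = (L.map (dualAct (dualAct t))).prod := by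
  induction L with
  | nil => rfl
  | cons a L ih => rw [List.map_cons, List.prod_cons, List.map_cons, List.prod_cons, ← ih]; rfl

lemma exists_list_prod_map_dualAct_dualAct_eq_comp {s : A →L[ℝ] B →L[ℝ] B}
    {t : A →L[ℝ] X →L[ℝ] X} {J : B →L[ℝ] X} (hJ : ∀ a b, J (s a b) = t a (J b))
    (hs : ∀ a G, ∃ b, bidualMap (s a) G = inclusionInDoubleDual ℝ B b)
    {L : List A} {S : X →L[ℝ] B} (hS : (L.map t).prod = J.comp S) (a : A) :
    ∃ S' : Dual ℝ (Dual ℝ X) →L[ℝ] B,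
      ((a :: L).map (dualAct (dualAct t))).prod =
        ((inclusionInDoubleDual ℝ X).comp J).comp S' := by
  obtain ⟨R, hR⟩ := exists_inclusionInDoubleDual_comp_eq (Y := Dual ℝ (Dual ℝ B)) _ (hs a)
  have hJa : (t a).comp J = J.comp (s a) := by ext b; exact (hJ a b).symm
  refine ⟨R.comp (bidualMap S), ?_⟩
  calc ((a :: L).map (dualAct (dualAct t))).prod
      = bidualMap ((t a).comp (J.comp S)) := by
        rw [List.map_cons, List.prod_cons, ← bidualMap_list_prod_map, hS]; rfl
    _ = ((bidualMap J).comp (bidualMap (s a))).comp (bidualMap S) := by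
        rw [← ContinuousLinearMap.comp_assoc, hJa, bidualMap_comp, bidualMap_comp]
    _ = ((bidualMap J).comp (inclusionInDoubleDual ℝ B)).comp (R.comp (bidualMap S)) := by
        rw [← hR]; rfl
    _ = ((inclusionInDoubleDual ℝ X).comp J).comp (R.comp (bidualMap S)) := by
        rw [bidualMap_comp_inclusionInDoubleDual]

end Biduals

namespace ModPk

def embed (P : ModPk A) : (k : ℕ) → P.X →L[ℝ] (P.iter (2 * k)).X
  | 0 => ContinuousLinearMap.id ℝ _
  | k + 1 => (inclusionInDoubleDual ℝ _).comp (P.embed k)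

lemma surjective_dualMap'_embed (P : ModPk A) (k : ℕ) :
    Function.Surjective (dualMap' (P.embed k)) := by
  induction k with
  | zero => exact fun ψ => ⟨ψ, rfl⟩
  | succ k ih =>
    intro ψ
    obtain ⟨x, hx⟩ := ih ψ
    exact ⟨inclusionInDoubleDual ℝ _ x, hx⟩

lemma isBimod_iter {μ : A →L[ℝ] A →L[ℝ] A} (P : ModPk A) (h : IsBimod μ P.l P.r) :
    ∀ m, IsBimod μ (P.iter m).l (P.iter m).r
  | 0 => h
  | m + 1 => isBimod_dualAct (isBimod_iter P h m)

section Side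

/- `σ` selects one of the two actions, `ModPk.l` or `ModPk.r`; for both, `hσ` below holds by
definition. -/
variable (σ : (Q : ModPk A) → A →L[ℝ] Q.X →L[ℝ] Q.X)

lemma embed_side (hσ : ∀ Q : ModPk A, σ Q.dual.dual = dualAct (dualAct (σ Q))) (P : ModPk A) :
    ∀ k a b, P.embed k (σ P a b) = σ (P.iter (2 * k)) a (P.embed k b)
  | 0, _, _ => rfl
  | k + 1, a, b => by
    change inclusionInDoubleDual ℝ _ (P.embed k (σ P a b)) = σ (P.iter (2 * k)).dual.dual a _
    rw [hσ, embed_side hσ P k]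
    rfl

lemma exists_list_prod_map_side_eq_embed_comp
    (hσ : ∀ Q : ModPk A, σ Q.dual.dual = dualAct (dualAct (σ Q))) (P : ModPk A)
    (hP : ∀ a G, ∃ b, σ P.dual.dual a G = inclusionInDoubleDual ℝ P.X b) :
    ∀ (k : ℕ) (L : List A), L.length = k →
      ∃ S : (P.iter (2 * k)).X →L[ℝ] P.X,
        (L.map (σ (P.iter (2 * k)))).prod = (P.embed k).comp S
  | 0, [], _ => ⟨ContinuousLinearMap.id ℝ _, rfl⟩
  | k + 1, a :: L, hL => by
    obtain ⟨S, hS⟩ := exists_list_prod_map_side_eq_embed_comp hσ P hP k L (Nat.succ.inj hL)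
    rw [hσ] at hP
    have := exists_list_prod_map_dualAct_dualAct_eq_comp (embed_side σ hσ P k) hP hS a
    rwa [← hσ] at this

end Side

end ModPk

section Algebra

variable {R X B : Type} [NormedRing R] [NormedAlgebra ℝ R]
  [NormedAddCommGroup X] [NormedSpace ℝ X] [NormedAddCommGroup B] [NormedSpace ℝ B]
  {l r : R →L[ℝ] X →L[ℝ] X}

lemma IsBimod.left_list_prod (h : IsBimod (ContinuousLinearMap.mul ℝ R) l r) {L : List R}
    (hL : L ≠ []) : l L.prod = (L.map l).prod :=
  (List.prod_hom_nonempty (⟨l, fun a b => ext (h.1 a b)⟩ : R →ₙ* (X →L[ℝ] X)) hL).symm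

lemma IsBimod.right_list_prod (h : IsBimod (ContinuousLinearMap.mul ℝ R) l r) {L : List R}
    (hL : L ≠ []) : r L.prod = (L.reverse.map r).prod := by
  have := List.prod_hom_nonempty
    (⟨fun a => MulOpposite.op (r a), fun a b => congrArg MulOpposite.op (ext (h.2.1 a b))⟩ :
      R →ₙ* (X →L[ℝ] X)ᵐᵒᵖ) hL
  rw [← MulOpposite.op_injective.eq_iff]
  simpa [MulOpposite.op_list_prod, List.map_reverse, Function.comp_def] using this.symm

lemma IsDer.apply_list_prod_eq_zero {Q : ModPk R}
    (hQ : IsBimod (ContinuousLinearMap.mul ℝ R) Q.l Q.r) {J : B →L[ℝ] Q.X} {n : ℕ} (hn : 0 < n)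
    (hl : ∀ L : List R, L.length = n → ∃ S : Q.X →L[ℝ] B, (L.map Q.l).prod = J.comp S)
    (hr : ∀ L : List R, L.length = n → ∃ S : Q.X →L[ℝ] B, (L.map Q.r).prod = J.comp S)
    {D : R →L[ℝ] Dual ℝ Q.X} (hD : IsDer (ContinuousLinearMap.mul ℝ R) Q.dual.l Q.dual.r D)
    (hann : ∀ a, dualMap' J (D a) = 0) {L : List R} (hL : L.length = 2 * n) :
    D L.prod = 0 := by
  have comp_eq_zero : ∀ {T : Q.X →L[ℝ] Q.X}, (∃ S : Q.X →L[ℝ] B, T = J.comp S) →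
      ∀ a, (D a).comp T = 0 := by
    rintro T ⟨S, rfl⟩ a
    rw [← ContinuousLinearMap.comp_assoc]
    exact congrArg (·.comp S) (hann a)
  have h₁ : (L.take n).length = n := by rw [List.length_take, hL]; omega
  have h₂ : (L.drop n).length = n := by rw [List.length_drop, hL]; omega
  have ne₁ : L.take n ≠ [] := List.ne_nil_of_length_pos (by omega)
  have ne₂ : L.drop n ≠ [] := List.ne_nil_of_length_pos (by omega)
  calc D L.prod = D ((L.take n).prod * (L.drop n).prod) := by rw [List.prod_take_mul_prod_drop]
    _ = (D (L.drop n).prod).comp (Q.r (L.take n).prod)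
          + (D (L.take n).prod).comp (Q.l (L.drop n).prod) := hD _ _
    _ = 0 := by
      rw [hQ.right_list_prod ne₁, hQ.left_list_prod ne₂,
        comp_eq_zero (hr _ (List.length_reverse.trans h₁)), comp_eq_zero (hl _ h₂), add_zero]

end Algebra

theorem stmt4 (A : Type) [NormedRing A] [NormedAlgebra ℝ A]
    (B : Type) [NormedAddCommGroup B] [NormedSpace ℝ B]
    (l r : A →L[ℝ] B →L[ℝ] B)
    (hbim : IsBimod (ContinuousLinearMap.mul ℝ A) l r)
    (n : ℕ)
    -- the span of `A^[2n]` is dense in `A`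
    (hdense : Dense (Submodule.span ℝ {x : A | ∃ L : List A, L.length = 2*n ∧ L.prod = x} : Set A))
    -- `A·B** ⊆ B` and `B**·A ⊆ B`
    (hl2 : ∀ (a : A) (G : ((ModPk.mk B l r).iter 2).X),
      ∃ b : B, ((ModPk.mk B l r).iter 2).l a G = inclusionInDoubleDual ℝ B b)
    (hr2 : ∀ (a : A) (G : ((ModPk.mk B l r).iter 2).X),
      ∃ b : B, ((ModPk.mk B l r).iter 2).r a G = inclusionInDoubleDual ℝ B b)
    -- `H¹(A, B*) = 0`
    (h1 : ∀ D : A →L[ℝ] ((ModPk.mk B l r).iter 1).X,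
      IsDer (ContinuousLinearMap.mul ℝ A) ((ModPk.mk B l r).iter 1).l ((ModPk.mk B l r).iter 1).r D →
      IsInner ((ModPk.mk B l r).iter 1).l ((ModPk.mk B l r).iter 1).r D) :
    -- `H¹(A, B^(2n+1)) = 0`
    ∀ D : A →L[ℝ] ((ModPk.mk B l r).iter (2*n+1)).X,
      IsDer (ContinuousLinearMap.mul ℝ A) ((ModPk.mk B l r).iter (2*n+1)).l
        ((ModPk.mk B l r).iter (2*n+1)).r D →
      IsInner ((ModPk.mk B l r).iter (2*n+1)).l ((ModPk.mk B l r).iter (2*n+1)).r D := by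
  intro D hD
  obtain rfl | hn := Nat.eq_zero_or_pos n
  · exact h1 D hD
  let P := ModPk.mk B l r
  obtain ⟨x₀, hx₀⟩ := exists_dualMap'_sub_innerDer_eq_zero (P.embed_side ModPk.l (fun _ => rfl) n)
    (P.embed_side ModPk.r (fun _ => rfl) n) (P.surjective_dualMap'_embed n) h1 hD
  have hvan : D - innerDer _ _ x₀ = 0 := ContinuousLinearMap.ext_on hdense <| by
    rintro _ ⟨L, hL, rfl⟩
    exact (hD.sub (isDer_innerDer (P.isBimod_iter hbim (2 * n + 1)) x₀)).apply_list_prod_eq_zero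
      (P.isBimod_iter hbim (2 * n)) hn
      (P.exists_list_prod_map_side_eq_embed_comp ModPk.l (fun _ => rfl) hl2 n)
      (P.exists_list_prod_map_side_eq_embed_comp ModPk.r (fun _ => rfl) hr2 n) hx₀ hL
  exact ⟨x₀, fun a => sub_eq_zero.mp (congrArg (· a) hvan)⟩
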